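/- The eight vectors λ₁, λ₂, λ₃, λ₄, λ₅, λ₆, λ₇, λ₈ are ℤ-linearly independent in ℂ⁴ (so the ℤ-submodule of ℂ⁴ they generate is free of rank 8). -/
import Mathlib


open Complex

/-- The sixth root of unity `ω = e^{πi/3} = (1 + i√3)/2`. -/
noncomputable def ω : ℂ := (1 + Real.sqrt 3 * I) / 2

/-- The basis vectors `λ₁, …, λ₈` of the range of the Chern–Connes character `𝐓₃`. -/
noncomputable def lam (θ : ℝ) : Fin 8 → Fin 4 → ℂ :=
  ![![1, 0, 0, 0],
    ![1/3, 1/3, 0, 0],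
    ![1/3, -ω/3, 0, 0],
    ![1/3, 0, 1/3, 0],
    ![1/3, 0, -ω/3, 0],
    ![1/3, 0, 0, 1/3],
    ![1/3, 0, 0, -ω/3],
    ![(θ : ℂ)/3, (1 + ω)/9, (1 + ω)/9, (1 + ω)/9]]

@[simp] lemma my_cons_val_five {α : Type*} {m : ℕ} (x : α) (u : Fin (m+5) → α) :
    Matrix.vecCons x u 5 = u 4 := rfl
@[simp] lemma my_cons_val_six {α : Type*} {m : ℕ} (x : α) (u : Fin (m+6) → α) :
    Matrix.vecCons x u 6 = u 5 := rfl
@[simp] lemma my_cons_val_seven {α : Type*} {m : ℕ} (x : α) (u : Fin (m+7) → α) :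
    Matrix.vecCons x u 7 = u 6 := rfl

/-- The eight vectors `λ₁, …, λ₈` are ℤ-linearly independent in ℂ⁴. -/
theorem lambda_linearIndependent (θ : ℝ) (hθ : Irrational θ) :
    LinearIndependent ℤ (lam θ) := by
  rw [Fintype.linearIndependent_iff]
  intro g hg
  have h : ∀ j : Fin 4, ∑ i : Fin 8, (g i : ℂ) * lam θ i j = 0 := by
    intro j
    have := congrFun hg j
    simpa [Finset.sum_apply, zsmul_eq_mul] using this
  have h0 := h 0
  have h1 := h 1
  have h2 := h 2
  have h3 := h 3
  simp [Fin.sum_univ_eight, lam] at h0 h1 h2 h3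
  rw [Complex.ext_iff] at h0 h1 h2 h3
  simp [ω, Complex.div_re, Complex.div_im, Complex.normSq_apply] at h0 h1 h2 h3
  obtain ⟨h1r, h1i⟩ := h1
  obtain ⟨h2r, h2i⟩ := h2
  obtain ⟨h3r, h3i⟩ := h3
  have hs : (0:ℝ) < Real.sqrt 3 := by positivity
  -- from the imaginary parts: g 7 = 3 * g 2, etc.
  have key : ∀ a b : ℤ, (a:ℝ) * (-(Real.sqrt 3 / 2) / 3) + (b:ℝ) * (Real.sqrt 3 / 2 / 9) = 0 →
      b = 3 * a := by
    intro a b hab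
    have k : ((b:ℝ) - 3 * a) * Real.sqrt 3 = 0 := by linear_combination 18 * hab
    rcases mul_eq_zero.mp k with k' | k'
    · have : (b:ℝ) = 3 * a := by linarith
      exact_mod_cast this
    · exact absurd k' hs.ne'
  have e2 : g 7 = 3 * g 2 := key _ _ h1i
  have e4 : g 7 = 3 * g 4 := key _ _ h2i
  have e6 : g 7 = 3 * g 6 := key _ _ h3i
  -- from the real parts: 2 * g k + g (k+1) * ... relations
  have keyr : ∀ a b c : ℤ, (a:ℝ) * 3⁻¹ + (b:ℝ) * (-2⁻¹ / 3) + (c:ℝ) * ((1 + 2⁻¹) / 9) = 0 →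
      2 * a - b + c = 0 := by
    intro a b c habc
    have : ((2 * a - b + c : ℤ) : ℝ) = 0 := by push_cast; linarith
    exact_mod_cast this
  have f1 : 2 * g 1 - g 2 + g 7 = 0 := keyr _ _ _ h1r
  have f2 : 2 * g 3 - g 4 + g 7 = 0 := keyr _ _ _ h2r
  have f3 : 2 * g 5 - g 6 + g 7 = 0 := keyr _ _ _ h3r
  -- g 7 = 0 from irrationality of θ
  have g7 : g 7 = 0 := by
    by_contra hne
    apply hθ
    refine ⟨-(3 * g 0 + g 1 + g 2 + g 3 + g 4 + g 5 + g 6 : ℤ) / (g 7 : ℚ), ?_⟩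
    have hg7 : ((g 7 : ℤ) : ℝ) ≠ 0 := Int.cast_ne_zero.mpr hne
    push_cast
    field_simp
    linarith [h0]
  have g2 : g 2 = 0 := by omega
  have g4 : g 4 = 0 := by omega
  have g1 : g 1 = 0 := by omega
  have g6 : g 6 = 0 := by omega
  have g3 : g 3 = 0 := by omega
  have g5 : g 5 = 0 := by omega
  have g0 : g 0 = 0 := by
    have : ((g 0 : ℤ) : ℝ) = 0 := by
      rw [g1, g2, g3, g4, g5, g6, g7] at h0
      push_cast at h0 ⊢
      linarith
    exact_mod_cast this
  intro i
  fin_cases i <;> assumption
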